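/- Let R be a Γ-graded integral domain. Then e(v) = v, where v is the classical v-operation A^v = (A⁻¹)⁻¹ with A⁻¹ = (R : A), which is homogeneous preserving, and e(v) is the largest classical extension of the homogeneous star operation obtained by restricting v to homogeneous fractional ideals. -/

import Mathlib

open FractionalIdeal
open scoped Classical

section Setup

variable {Γ : Type*} [AddCommMonoid Γ] [LinearOrder Γ] [IsOrderedCancelAddMonoid Γ] [DecidableEq Γ]
  {R : Type*} [CommRing R] [IsDomain R]
  (𝒜 : Γ → AddSubgroup R) [GradedRing 𝒜]
  (K : Type*) [Field K] [Algebra R K] [IsFractionRing R K]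

/-- The integral ideal corresponding to a fractional ideal contained in `R`. -/
def idealOf (J : FractionalIdeal (nonZeroDivisors R) K) : Ideal R :=
  (J : Submodule R K).comap (Algebra.linearMap R K)

/-- An integral ideal is homogeneous if it contains all homogeneous components of its elements. -/
def IsHomIdeal (I : Ideal R) : Prop := ∀ f ∈ I, ∀ γ : Γ, GradedRing.proj 𝒜 γ f ∈ I

/-- `C(I)`: the homogeneous ideal generated by the homogeneous components of elements of `I`. -/
def homC (I : Ideal R) : Ideal R :=
  Ideal.span {x | ∃ f ∈ I, ∃ γ : Γ, x = GradedRing.proj 𝒜 γ f}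

/-- `C(J)` for a fractional ideal `J ⊆ R`, as a fractional ideal. -/
def Cfrac (J : FractionalIdeal (nonZeroDivisors R) K) : FractionalIdeal (nonZeroDivisors R) K :=
  ↑(homC 𝒜 (idealOf K J))

/-- A fractional ideal is homogeneous if some nonzero homogeneous `s ∈ R` multiplies it into a
homogeneous integral ideal. -/
def IsHomFrac (A : FractionalIdeal (nonZeroDivisors R) K) : Prop :=
  ∃ s : R, s ≠ 0 ∧ SetLike.IsHomogeneousElem 𝒜 s ∧
    spanSingleton (nonZeroDivisors R) (algebraMap R K s) * A ≤ 1 ∧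
    IsHomIdeal 𝒜 (idealOf K (spanSingleton (nonZeroDivisors R) (algebraMap R K s) * A))

/-- A homogeneous element of the homogeneous quotient field, viewed inside `K`. -/
def IsHomElem (x : K) : Prop :=
  ∃ a b : R, SetLike.IsHomogeneousElem 𝒜 a ∧ SetLike.IsHomogeneousElem 𝒜 b ∧ b ≠ 0 ∧
    x * algebraMap R K b = algebraMap R K a

end Setup

/-- A homogeneous star operation on the graded domain `R`. -/
structure HomStarOp {Γ : Type*} [AddCommMonoid Γ] [LinearOrder Γ] [IsOrderedCancelAddMonoid Γ] [DecidableEq Γ]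
    {R : Type*} [CommRing R] [IsDomain R] (𝒜 : Γ → AddSubgroup R) [GradedRing 𝒜]
    (K : Type*) [Field K] [Algebra R K] [IsFractionRing R K] where
  toFun : FractionalIdeal (nonZeroDivisors R) K → FractionalIdeal (nonZeroDivisors R) K
  hom : ∀ A, A ≠ 0 → IsHomFrac 𝒜 K A → IsHomFrac 𝒜 K (toFun A)
  map_span : ∀ x : K, x ≠ 0 → IsHomElem 𝒜 K x →
    toFun (spanSingleton (nonZeroDivisors R) x) = spanSingleton (nonZeroDivisors R) x
  map_smul : ∀ x : K, x ≠ 0 → IsHomElem 𝒜 K x → ∀ A, A ≠ 0 → IsHomFrac 𝒜 K A →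
    toFun (spanSingleton (nonZeroDivisors R) x * A) = spanSingleton (nonZeroDivisors R) x * toFun A
  le_star : ∀ A, A ≠ 0 → IsHomFrac 𝒜 K A → A ≤ toFun A
  mono : ∀ A B, A ≠ 0 → B ≠ 0 → IsHomFrac 𝒜 K A → IsHomFrac 𝒜 K B → A ≤ B → toFun A ≤ toFun B
  idem : ∀ A, A ≠ 0 → IsHomFrac 𝒜 K A → toFun (toFun A) = toFun A

/-- A classical star operation on the domain `R`. -/
structure StarOp (R : Type*) [CommRing R] [IsDomain R]
    (K : Type*) [Field K] [Algebra R K] [IsFractionRing R K] where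
  toFun : FractionalIdeal (nonZeroDivisors R) K → FractionalIdeal (nonZeroDivisors R) K
  map_span : ∀ x : K, x ≠ 0 →
    toFun (spanSingleton (nonZeroDivisors R) x) = spanSingleton (nonZeroDivisors R) x
  map_smul : ∀ x : K, x ≠ 0 → ∀ A, A ≠ 0 →
    toFun (spanSingleton (nonZeroDivisors R) x * A) = spanSingleton (nonZeroDivisors R) x * toFun A
  le_star : ∀ A, A ≠ 0 → A ≤ toFun A
  mono : ∀ A B, A ≠ 0 → B ≠ 0 → A ≤ B → toFun A ≤ toFun B
  idem : ∀ A, A ≠ 0 → toFun (toFun A) = toFun A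

section EStar

variable {Γ : Type*} [AddCommMonoid Γ] [LinearOrder Γ] [IsOrderedCancelAddMonoid Γ] [DecidableEq Γ]
  {R : Type*} [CommRing R] [IsDomain R]
  (𝒜 : Γ → AddSubgroup R) [GradedRing 𝒜]
  (K : Type*) [Field K] [Algebra R K] [IsFractionRing R K]

/-- The submodule `⋂ { z⁻¹ (C(zA))^⋆ : 0 ≠ z ∈ (R : A) }`. -/
def eStarSub (s : HomStarOp 𝒜 K) (A : FractionalIdeal (nonZeroDivisors R) K) : Submodule R K :=
  ⨅ z ∈ {z : K | z ≠ 0 ∧ spanSingleton (nonZeroDivisors R) z * A ≤ 1},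
    ↑(spanSingleton (nonZeroDivisors R) z⁻¹ *
      s.toFun (Cfrac 𝒜 K (spanSingleton (nonZeroDivisors R) z * A)))

/-- The extension `e(⋆)` of a homogeneous star operation `⋆`,
`A^{e(⋆)} := ⋂ { z⁻¹ (C(zA))^⋆ : 0 ≠ z ∈ (R : A) }` (which is a fractional ideal whenever
`A` is a nonzero fractional ideal). -/
noncomputable def eStar (s : HomStarOp 𝒜 K) (A : FractionalIdeal (nonZeroDivisors R) K) :
    FractionalIdeal (nonZeroDivisors R) K :=
  if h : IsFractional (nonZeroDivisors R) (eStarSub 𝒜 K s A) then ⟨_, h⟩ else 0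

end EStar


section Aux
set_option linter.unusedSectionVars false

variable {R : Type*} [CommRing R] [IsDomain R]
  (K : Type*) [Field K] [Algebra R K] [IsFractionRing R K]

lemma mul_ne_zero' {z : K} (hz : z ≠ 0) {A : FractionalIdeal (nonZeroDivisors R) K} (hA : A ≠ 0) :
    spanSingleton (nonZeroDivisors R) z * A ≠ 0 := by
  intro h
  apply hA
  have h2 : spanSingleton (nonZeroDivisors R) z⁻¹ * (spanSingleton (nonZeroDivisors R) z * A) = A := by
    rw [← mul_assoc, spanSingleton_mul_spanSingleton, inv_mul_cancel₀ hz, spanSingleton_one,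
      one_mul]
  rw [h, mul_zero] at h2; exact h2.symm

lemma one_div_ne_zero' {A : FractionalIdeal (nonZeroDivisors R) K} (hA : A ≠ 0) :
    1 / A ≠ 0 := by
  obtain ⟨a, haS, ha⟩ := A.isFractional
  have hane : algebraMap R K a ≠ 0 := by
    exact IsFractionRing.to_map_ne_zero_of_mem_nonZeroDivisors (K := K) haS
  have hmem : algebraMap R K a ∈ 1 / A := by
    rw [mem_div_iff_of_ne_zero hA]
    intro y hy
    obtain ⟨r, hr⟩ := ha y hy
    rw [mem_one_iff]
    exact ⟨r, by rw [hr, Algebra.smul_def]⟩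
  intro h
  rw [h] at hmem
  exact hane (by simpa using hmem)

lemma div_antitone' {A B : FractionalIdeal (nonZeroDivisors R) K} (hA : A ≠ 0) (hB : B ≠ 0)
    (h : A ≤ B) : 1 / B ≤ 1 / A := by
  rw [le_div_iff_of_ne_zero hA]
  intro x hx y hy
  rw [mem_div_iff_of_ne_zero hB] at hx
  exact hx y (h hy)

lemma one_div_spanSingleton_mul {z : K} (hz : z ≠ 0) {B : FractionalIdeal (nonZeroDivisors R) K}
    (hB : B ≠ 0) :
    1 / (spanSingleton (nonZeroDivisors R) z * B)
      = spanSingleton (nonZeroDivisors R) z⁻¹ * (1 / B) := by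
  ext x
  rw [mem_div_iff_of_ne_zero (mul_ne_zero' K hz hB), mem_singleton_mul]
  constructor
  · intro h
    refine ⟨z * x, ?_, by field_simp⟩
    rw [mem_div_iff_of_ne_zero hB]
    intro w hw
    have := h (z * w) (mem_singleton_mul.mpr ⟨w, hw, rfl⟩)
    convert this using 1; ring
  · rintro ⟨y', hy', rfl⟩ y hy
    obtain ⟨w, hw, rfl⟩ := mem_singleton_mul.mp hy
    rw [mem_div_iff_of_ne_zero hB] at hy'
    have := hy' w hw
    convert this using 1; field_simp

end Aux

section Aux2
set_option linter.unusedSectionVars false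

variable {Γ : Type*} [AddCommMonoid Γ] [LinearOrder Γ] [IsOrderedCancelAddMonoid Γ] [DecidableEq Γ]
  {R : Type*} [CommRing R] [IsDomain R]
  (𝒜 : Γ → AddSubgroup R) [GradedRing 𝒜]
  (K : Type*) [Field K] [Algebra R K] [IsFractionRing R K]

lemma le_homC' (I : Ideal R) : I ≤ homC 𝒜 I := by
  intro f hf
  rw [← DirectSum.sum_support_decompose 𝒜 f]
  exact Ideal.sum_mem _ fun γ _ =>
    Ideal.subset_span ⟨f, hf, γ, (GradedRing.proj_apply 𝒜 γ f).symm⟩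

lemma isHomIdeal_homC (I : Ideal R) : IsHomIdeal 𝒜 (homC 𝒜 I) := by
  have h : (homC 𝒜 I).IsHomogeneous 𝒜 := by
    apply Ideal.homogeneous_span
    rintro x ⟨f, hf, γ, rfl⟩
    rw [GradedRing.proj_apply]
    exact ⟨γ, SetLike.coe_mem _⟩
  intro f hf γ
  rw [GradedRing.proj_apply]
  exact h γ hf

lemma mem_idealOf {J : FractionalIdeal (nonZeroDivisors R) K} {a : R} :
    a ∈ idealOf K J ↔ algebraMap R K a ∈ J := by
  simp [idealOf, Submodule.mem_comap, mem_coe]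

lemma coeIdeal_idealOf {J : FractionalIdeal (nonZeroDivisors R) K} (hJ : J ≤ 1) :
    (idealOf K J : FractionalIdeal (nonZeroDivisors R) K) = J := by
  ext x
  rw [mem_coeIdeal]
  constructor
  · rintro ⟨a, ha, rfl⟩; exact (mem_idealOf K).mp ha
  · intro hx
    obtain ⟨r, hr⟩ := (mem_one_iff (nonZeroDivisors R)).mp (hJ hx)
    exact ⟨r, (mem_idealOf K).mpr (hr ▸ hx), hr⟩

lemma idealOf_coeIdeal (I : Ideal R) :
    idealOf K (I : FractionalIdeal (nonZeroDivisors R) K) = I := by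
  ext a
  rw [mem_idealOf, mem_coeIdeal]
  constructor
  · rintro ⟨b, hb, hba⟩
    rwa [← IsFractionRing.injective R K hba]
  · exact fun ha => ⟨a, ha, rfl⟩

lemma le_Cfrac {J : FractionalIdeal (nonZeroDivisors R) K} (hJ : J ≤ 1) :
    J ≤ Cfrac 𝒜 K J := by
  conv_lhs => rw [← coeIdeal_idealOf K hJ]
  exact (coeIdeal_le_coeIdeal K).mpr (le_homC' 𝒜 _)

lemma Cfrac_ne_zero {J : FractionalIdeal (nonZeroDivisors R) K} (hJ0 : J ≠ 0) (hJ : J ≤ 1) :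
    Cfrac 𝒜 K J ≠ 0 :=
  fun h => hJ0 (FractionalIdeal.le_zero_iff.mp (h ▸ le_Cfrac 𝒜 K hJ))

lemma isHomFrac_Cfrac (J : FractionalIdeal (nonZeroDivisors R) K) :
    IsHomFrac 𝒜 K (Cfrac 𝒜 K J) := by
  refine ⟨1, one_ne_zero, SetLike.isHomogeneousElem_one 𝒜, ?_, ?_⟩
  · rw [_root_.map_one, spanSingleton_one, one_mul]
    exact coeIdeal_le_one
  · rw [_root_.map_one, spanSingleton_one, one_mul]
    show IsHomIdeal 𝒜 (idealOf K ((homC 𝒜 (idealOf K J) : Ideal R) :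
      FractionalIdeal (nonZeroDivisors R) K))
    rw [idealOf_coeIdeal]
    exact isHomIdeal_homC 𝒜 _

lemma one_ne_zero'' : (1 : FractionalIdeal (nonZeroDivisors R) K) ≠ 0 := by
  intro h
  have : (1 : K) ∈ (0 : FractionalIdeal (nonZeroDivisors R) K) := h ▸ one_mem_one _
  simp at this

end Aux2

/-- `e(v) = v`, where `v` is the classical `v`-operation `A ↦ (A⁻¹)⁻¹`. -/
theorem stmt_9
    {Γ : Type*} [AddCommMonoid Γ] [LinearOrder Γ] [IsOrderedCancelAddMonoid Γ] [DecidableEq Γ]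
    {R : Type*} [CommRing R] [IsDomain R]
    (𝒜 : Γ → AddSubgroup R) [GradedRing 𝒜]
    (K : Type*) [Field K] [Algebra R K] [IsFractionRing R K]
    (sv : HomStarOp 𝒜 K)
    (hv : ∀ A : FractionalIdeal (nonZeroDivisors R) K, A ≠ 0 → IsHomFrac 𝒜 K A →
      sv.toFun A = 1 / (1 / A)) :
    ∀ A : FractionalIdeal (nonZeroDivisors R) K, A ≠ 0 → eStar 𝒜 K sv A = 1 / (1 / A) := by
  intro A hA
  have h1A : 1 / A ≠ 0 := one_div_ne_zero' K hA
  have hstar : ∀ z : K, z ≠ 0 → spanSingleton (nonZeroDivisors R) z * A ≤ 1 →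
      sv.toFun (Cfrac 𝒜 K (spanSingleton (nonZeroDivisors R) z * A))
        = 1 / (1 / Cfrac 𝒜 K (spanSingleton (nonZeroDivisors R) z * A)) := fun z hz hz1 =>
    hv _ (Cfrac_ne_zero 𝒜 K (mul_ne_zero' K hz hA) hz1) (isHomFrac_Cfrac 𝒜 K _)
  have key : eStarSub 𝒜 K sv A
      = ((1 / (1 / A) : FractionalIdeal (nonZeroDivisors R) K) : Submodule R K) := by
    apply le_antisymm
    · intro x hx
      rw [mem_coe, mem_div_iff_of_ne_zero h1A]
      intro u hu
      by_cases hu0 : u = 0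
      · rw [hu0, mul_zero]; exact zero_mem _
      have hu1 : spanSingleton (nonZeroDivisors R) u * A ≤ 1 := by
        rw [mul_le]
        intro i hi j hj
        obtain ⟨c, rfl⟩ := (mem_spanSingleton _).mp hi
        rw [smul_mul_assoc]
        exact Submodule.smul_mem _ c ((mem_div_iff_of_ne_zero hA).mp hu j hj)
      have hx' : x ∈ spanSingleton (nonZeroDivisors R) u⁻¹ *
          sv.toFun (Cfrac 𝒜 K (spanSingleton (nonZeroDivisors R) u * A)) := by
        rw [← mem_coe]
        simp only [eStarSub, Submodule.mem_iInf] at hx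
        exact hx u ⟨hu0, hu1⟩
      rw [hstar u hu0 hu1] at hx'
      obtain ⟨y', hy', rfl⟩ := mem_singleton_mul.mp hx'
      have hy1 : y' ∈ (1 : FractionalIdeal (nonZeroDivisors R) K) := by
        have hC0 : Cfrac 𝒜 K (spanSingleton (nonZeroDivisors R) u * A) ≠ 0 :=
          Cfrac_ne_zero 𝒜 K (mul_ne_zero' K hu0 hA) hu1
        have hC1 : Cfrac 𝒜 K (spanSingleton (nonZeroDivisors R) u * A) ≤ 1 := coeIdeal_le_one
        have h1leC : (1 : FractionalIdeal (nonZeroDivisors R) K)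
            ≤ 1 / Cfrac 𝒜 K (spanSingleton (nonZeroDivisors R) u * A) := by
          rw [le_div_iff_of_ne_zero hC0]
          intro i hi j hj
          have := mul_mem_mul hi (hC1 hj)
          rwa [mul_one] at this
        have h1C0 : 1 / Cfrac 𝒜 K (spanSingleton (nonZeroDivisors R) u * A) ≠ 0 := by
          intro h
          rw [h, FractionalIdeal.le_zero_iff] at h1leC
          exact one_ne_zero'' K h1leC
        have h2 := div_antitone' K (one_ne_zero'' (R := R) K) h1C0 h1leC
        rw [FractionalIdeal.div_one] at h2
        exact h2 hy'
      have heq : u⁻¹ * y' * u = y' := by field_simp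
      rw [heq]
      exact hy1
    · refine le_iInf fun z => le_iInf fun hz => ?_
      obtain ⟨hz0, hz1⟩ := hz
      rw [hstar z hz0 hz1]
      rw [coe_le_coe]
      have hB0 : spanSingleton (nonZeroDivisors R) z * A ≠ 0 := mul_ne_zero' K hz0 hA
      have hC0 : Cfrac 𝒜 K (spanSingleton (nonZeroDivisors R) z * A) ≠ 0 :=
        Cfrac_ne_zero 𝒜 K hB0 hz1
      have hBC : spanSingleton (nonZeroDivisors R) z * A
          ≤ Cfrac 𝒜 K (spanSingleton (nonZeroDivisors R) z * A) := le_Cfrac 𝒜 K hz1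
      have h1B : 1 / (spanSingleton (nonZeroDivisors R) z * A)
          = spanSingleton (nonZeroDivisors R) z⁻¹ * (1 / A) :=
        one_div_spanSingleton_mul K hz0 hA
      have h1B0 : 1 / (spanSingleton (nonZeroDivisors R) z * A) ≠ 0 := one_div_ne_zero' K hB0
      have h1C0 : 1 / Cfrac 𝒜 K (spanSingleton (nonZeroDivisors R) z * A) ≠ 0 :=
        one_div_ne_zero' K hC0
      have step1 := div_antitone' K hB0 hC0 hBC
      have step2 := div_antitone' K h1C0 h1B0 step1
      have calc1 : 1 / (1 / (spanSingleton (nonZeroDivisors R) z * A))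
          = spanSingleton (nonZeroDivisors R) z * (1 / (1 / A)) := by
        rw [h1B, one_div_spanSingleton_mul K (inv_ne_zero hz0) h1A, inv_inv]
      have hrw : 1 / (1 / A) = spanSingleton (nonZeroDivisors R) z⁻¹ *
          (1 / (1 / (spanSingleton (nonZeroDivisors R) z * A))) := by
        rw [calc1, ← mul_assoc, spanSingleton_mul_spanSingleton, inv_mul_cancel₀ hz0,
          spanSingleton_one, one_mul]
      rw [hrw]
      rw [mul_le]
      intro i hi j hj
      exact mul_mem_mul hi (step2 hj)
  have hfrac : IsFractional (nonZeroDivisors R) (eStarSub 𝒜 K sv A) := by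
    rw [key]
    exact (1 / (1 / A)).isFractional
  rw [eStar]
  exact (dif_pos hfrac).trans (coeToSubmodule_injective key)
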